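/- arXiv:2404.17158 — 3 statements merged into one kernel-verified Lean document; each statement's English description precedes it below -/
import Mathlib

section
/- The function f(x, y) = p · max_{j∈[d]} max(y_j − x_j, 0) + Σ_{j=1}^d c_j x_j, with p ≥ 0 and fixed y ∈ Z^d, is an L♮-convex function of x ∈ Z^d. -/
lemma floor2 (m : ℤ) : ⌊((m : ℤ) : ℚ) / 2⌋ = m / 2 := by
  have h := Rat.floor_intCast_div_natCast m 2
  simpa using h

lemma ceil2 (m : ℤ) : ⌈((m : ℤ) : ℚ) / 2⌉ = -((-m) / 2) := by
  rw [← neg_neg ⌈((m : ℤ) : ℚ) / 2⌉, ← Int.floor_neg, ← neg_div, ← Int.cast_neg, floor2]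

lemma fold_cast {d : ℕ} (g : Fin d → ℤ) :
    Finset.univ.fold max (0 : ℝ) (fun j => ((g j : ℤ) : ℝ))
      = ((Finset.univ.fold max (0 : ℤ) g : ℤ) : ℝ) := by
  have := Finset.fold_hom (s := (Finset.univ : Finset (Fin d))) (op := max) (b := (0:ℤ))
    (f := g) (op' := max) (m := fun z : ℤ => (z : ℝ)) (fun a b => by simp [Int.cast_max])
  simpa using this

/-- A function `f : ℤ^d → ℝ` is L♮-convex if it satisfies discrete midpoint convexity. -/
def LnatConvex {d : ℕ} (f : (Fin d → ℤ) → ℝ) : Prop :=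
  ∀ x y : Fin d → ℤ,
    f x + f y ≥
      f (fun i => ⌈((x i + y i : ℤ) : ℚ) / 2⌉) + f (fun i => ⌊((x i + y i : ℤ) : ℚ) / 2⌋)

theorem stmt_4 {d : ℕ} (p : ℝ) (hp : 0 ≤ p) (c : Fin d → ℝ) (y : Fin d → ℤ) :
    LnatConvex (fun x =>
      p * (Finset.univ.fold max (0 : ℝ) (fun j => ((y j - x j : ℤ) : ℝ)))
        + ∑ j, c j * (x j : ℝ)) := by
  intro x x'
  simp only [ge_iff_le, fold_cast, ceil2, floor2]
  set A : ℤ := Finset.univ.fold max 0 (fun j => y j - x j) with hA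
  set B : ℤ := Finset.univ.fold max 0 (fun j => y j - x' j) with hB
  have hAx : ∀ j, y j - x j ≤ A := fun j =>
    (Finset.le_fold_max _).2 (Or.inr ⟨j, Finset.mem_univ j, le_rfl⟩)
  have hBx : ∀ j, y j - x' j ≤ B := fun j =>
    (Finset.le_fold_max _).2 (Or.inr ⟨j, Finset.mem_univ j, le_rfl⟩)
  have hA0 : (0:ℤ) ≤ A := (Finset.le_fold_max _).2 (Or.inl le_rfl)
  have hB0 : (0:ℤ) ≤ B := (Finset.le_fold_max _).2 (Or.inl le_rfl)
  -- bound the two midpoint folds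
  have h1 : Finset.univ.fold max (0:ℤ) (fun j => y j - (-(-(x j + x' j) / 2))) ≤ (A + B) / 2 := by
    refine (Finset.fold_max_le _).2 ⟨by omega, fun j _ => ?_⟩
    have := hAx j; have := hBx j; omega
  have h2 : Finset.univ.fold max (0:ℤ) (fun j => y j - (x j + x' j) / 2) ≤ (A + B) - (A + B) / 2 := by
    refine (Finset.fold_max_le _).2 ⟨by omega, fun j _ => ?_⟩
    have := hAx j; have := hBx j; omega
  have hfold : ((Finset.univ.fold max (0:ℤ) (fun j => y j - (-(-(x j + x' j) / 2))) : ℤ) : ℝ)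
      + ((Finset.univ.fold max (0:ℤ) (fun j => y j - (x j + x' j) / 2) : ℤ) : ℝ)
      ≤ (A : ℝ) + (B : ℝ) := by
    have : Finset.univ.fold max (0:ℤ) (fun j => y j - (-(-(x j + x' j) / 2)))
        + Finset.univ.fold max (0:ℤ) (fun j => y j - (x j + x' j) / 2) ≤ A + B := by omega
    exact_mod_cast this
  have hlin : (∑ j, c j * ((-(-(x j + x' j) / 2) : ℤ) : ℝ))
      + (∑ j, c j * (((x j + x' j) / 2 : ℤ) : ℝ))
      = (∑ j, c j * (x j : ℝ)) + (∑ j, c j * (x' j : ℝ)) := by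
    rw [← Finset.sum_add_distrib, ← Finset.sum_add_distrib]
    refine Finset.sum_congr rfl fun j _ => ?_
    have h : ((-(-(x j + x' j) / 2) : ℤ) : ℝ) + (((x j + x' j) / 2 : ℤ) : ℝ)
        = (x j : ℝ) + (x' j : ℝ) := by
      have : (-(-(x j + x' j) / 2) : ℤ) + ((x j + x' j) / 2 : ℤ) = x j + x' j := by omega
      exact_mod_cast this
    rw [← mul_add, h, mul_add]
  have hm := mul_le_mul_of_nonneg_left hfold hp
  linarith [hm, hlin]
end

section
/- Let f : {0,1}^d → R be submodular with f̂ its Lovász extension, x ∈ [0,1]^d with sorted order x_{π(1)} ≥ … ≥ x_{π(d)}, and A_i = {π(1),…,π(i)}. Define g ∈ R^d by g_{π(i)} = f(χ_{A_i}) − f(χ_{A_{i−1}}). Then g is a subgradient of f̂ at x: for all y ∈ [0,1]^d, f̂(y) ≥ f̂(x) + ⟨g, y − x⟩. -/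
open MeasureTheory

/-- A set function on subsets of `[d]` is submodular. -/
def Submodular {d : ℕ} (f : Set (Fin d) → ℝ) : Prop :=
  ∀ A B : Set (Fin d), f (A ∪ B) + f (A ∩ B) ≤ f A + f B

/-- The Lovász extension of `f`, via the expectation over a uniform threshold. -/
noncomputable def lovasz {d : ℕ} (f : Set (Fin d) → ℝ) (v : Fin d → ℝ) : ℝ :=
  ∫ τ in Set.Ioc (0 : ℝ) 1, f {j | τ < v j}

/-!
The modular function `S ↦ f ∅ + ∑_{j ∈ S} g j` lies below `f` on every set, by diminishing
returns of `f` along the chain `A_0 ⊆ A_1 ⊆ ⋯ ⊆ A_d`, and agrees with `f` on the chain sets,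
among which are all superlevel sets of `x`.
The Lovász extension is monotone in the set function, and that of a modular function is the
affine map `v ↦ f ∅ + ⟨g, v⟩` on `[0,1]^d`. Hence `f̂ x = f ∅ + ⟨g, x⟩` and `f̂ y ≥ f ∅ + ⟨g, y⟩`.
-/

open Set

variable {d : ℕ}

theorem Submodular.sub_le_sub_of_subset {f : Set (Fin d) → ℝ} (hf : Submodular f)
    {T B : Set (Fin d)} {a : Fin d} (hTB : T ⊆ B) (ha : a ∉ B) :
    f (insert a B) - f B ≤ f (insert a T) - f T := by
  have h := hf B (insert a T)
  rw [union_insert, union_eq_self_of_subset_right hTB, inter_insert_of_notMem ha,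
    inter_eq_right.2 hTB] at h
  linarith

-- The paper's `A_m = {π(1), …, π(m)}`, with `π` shifted to start at `0`.
def permPrefix (π : Equiv.Perm (Fin d)) (m : ℕ) : Set (Fin d) :=
  {j | (π.symm j : ℕ) < m}

section permPrefix

variable (π : Equiv.Perm (Fin d))

theorem setOf_exists_lt_apply_eq_permPrefix (m : ℕ) :
    {j | ∃ k : Fin d, (k : ℕ) < m ∧ π k = j} = permPrefix π m := by
  ext j
  exact ⟨by rintro ⟨k, hk, rfl⟩; simpa [permPrefix] using hk, fun h => ⟨_, h, π.apply_symm_apply j⟩⟩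

@[simp]
theorem permPrefix_zero : permPrefix π 0 = ∅ := by
  simp [permPrefix]

@[simp]
theorem permPrefix_self : permPrefix π d = univ := by
  simp [permPrefix]

theorem permPrefix_succ (k : Fin d) : permPrefix π (k + 1) = insert (π k) (permPrefix π k) := by
  ext j
  simp only [permPrefix, mem_insert_iff, mem_ofPred_eq, Nat.lt_succ_iff_lt_or_eq, Fin.val_inj,
    π.symm_apply_eq]
  tauto

theorem apply_notMem_permPrefix (k : Fin d) : π k ∉ permPrefix π k := by
  simp [permPrefix]

theorem sub_empty_eq_sum_inter_permPrefix (f : Set (Fin d) → ℝ) (S : Set (Fin d)) :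
    f S - f ∅ = ∑ k : Fin d, (f (S ∩ permPrefix π (k + 1)) - f (S ∩ permPrefix π k)) := by
  rw [Fin.sum_univ_eq_sum_range (fun m => f (S ∩ permPrefix π (m + 1)) - f (S ∩ permPrefix π m)),
    Finset.sum_range_sub (fun m => f (S ∩ permPrefix π m))]
  simp

end permPrefix

section marginal

variable {f : Set (Fin d) → ℝ} (π : Equiv.Perm (Fin d)) (S : Set (Fin d)) (k : Fin d)

theorem inter_permPrefix_succ_of_notMem (hk : π k ∉ S) :
    S ∩ permPrefix π (k + 1) = S ∩ permPrefix π k := by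
  rw [permPrefix_succ, inter_insert_of_notMem hk]

theorem Submodular.marginal_mul_indicator_le (hf : Submodular f) :
    (f (permPrefix π (k + 1)) - f (permPrefix π k)) * S.indicator 1 (π k) ≤
      f (S ∩ permPrefix π (k + 1)) - f (S ∩ permPrefix π k) := by
  by_cases hk : π k ∈ S
  · rw [indicator_of_mem hk, Pi.one_apply, mul_one, permPrefix_succ, inter_insert_of_mem hk]
    exact hf.sub_le_sub_of_subset inter_subset_right (apply_notMem_permPrefix π k)
  · simp [indicator_of_notMem hk, inter_permPrefix_succ_of_notMem π S k hk]

theorem marginal_mul_indicator_eq_of_isLowerSet (hS : IsLowerSet (π ⁻¹' S)) :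
    (f (permPrefix π (k + 1)) - f (permPrefix π k)) * S.indicator 1 (π k) =
      f (S ∩ permPrefix π (k + 1)) - f (S ∩ permPrefix π k) := by
  by_cases hk : π k ∈ S
  · have hsub : ∀ m ≤ (k : ℕ) + 1, permPrefix π m ⊆ S := fun m hm j hj =>
      have hjk : π.symm j ≤ k := by simp only [permPrefix, mem_ofPred_eq] at hj; omega
      π.apply_symm_apply j ▸ hS hjk hk
    rw [indicator_of_mem hk, Pi.one_apply, mul_one, inter_eq_right.2 (hsub _ le_rfl),
      inter_eq_right.2 (hsub _ (Nat.le_succ _))]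
  · simp [indicator_of_notMem hk, inter_permPrefix_succ_of_notMem π S k hk]

end marginal

noncomputable def modularFn (c : ℝ) (g : Fin d → ℝ) (S : Set (Fin d)) : ℝ :=
  c + ∑ j, g j * S.indicator 1 j

section modularFn

variable {f : Set (Fin d) → ℝ} {π : Equiv.Perm (Fin d)} {g : Fin d → ℝ}

theorem modularFn_eq_sum_marginal_mul_indicator
    (hg : ∀ k : Fin d, g (π k) = f (permPrefix π (k + 1)) - f (permPrefix π k))
    (S : Set (Fin d)) :
    modularFn (f ∅) g S = f ∅ + ∑ k : Fin d,
      (f (permPrefix π (k + 1)) - f (permPrefix π k)) * S.indicator 1 (π k) := by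
  rw [modularFn, ← Equiv.sum_comp π]
  simp only [hg]

theorem Submodular.modularFn_le (hf : Submodular f)
    (hg : ∀ k : Fin d, g (π k) = f (permPrefix π (k + 1)) - f (permPrefix π k))
    (S : Set (Fin d)) : modularFn (f ∅) g S ≤ f S := by
  have := sub_empty_eq_sum_inter_permPrefix π f S
  rw [modularFn_eq_sum_marginal_mul_indicator hg]
  linarith [Finset.sum_le_sum fun k (_ : k ∈ Finset.univ) => hf.marginal_mul_indicator_le π S k]

theorem modularFn_eq_of_isLowerSet
    (hg : ∀ k : Fin d, g (π k) = f (permPrefix π (k + 1)) - f (permPrefix π k))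
    {S : Set (Fin d)} (hS : IsLowerSet (π ⁻¹' S)) : modularFn (f ∅) g S = f S := by
  rw [modularFn_eq_sum_marginal_mul_indicator hg,
    Finset.sum_congr rfl fun k _ => marginal_mul_indicator_eq_of_isLowerSet π S k hS,
    ← sub_empty_eq_sum_inter_permPrefix]
  ring

end modularFn

theorem integrableOn_lovasz_integrand (f : Set (Fin d) → ℝ) (v : Fin d → ℝ) :
    IntegrableOn (fun τ => f {j | τ < v j}) (Ioc 0 1) := by
  have hmeas : Measurable fun τ : ℝ => {j | τ < v j} :=
    measurable_set_iff.2 fun j => by fun_prop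
  obtain ⟨M, hM⟩ := (finite_range fun S => ‖f S‖).bddAbove
  exact Measure.integrableOn_of_bounded (M := M) (by simp)
    ((measurable_of_countable f).comp hmeas).aestronglyMeasurable
    (Filter.Eventually.of_forall fun τ => hM ⟨_, rfl⟩)

theorem lovasz_mono {f₁ f₂ : Set (Fin d) → ℝ} (h : ∀ S, f₁ S ≤ f₂ S) (v : Fin d → ℝ) :
    lovasz f₁ v ≤ lovasz f₂ v :=
  setIntegral_mono (integrableOn_lovasz_integrand f₁ v) (integrableOn_lovasz_integrand f₂ v)
    fun _ => h _

theorem setIntegral_Ioc_zero_one_indicator_Iio {c : ℝ} (hc : c ∈ Icc (0 : ℝ) 1) :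
    ∫ τ in Ioc (0 : ℝ) 1, (Iio c).indicator 1 τ = c := by
  rw [integral_indicator_one measurableSet_Iio, measureReal_restrict_apply measurableSet_Iio,
    show Iio c ∩ Ioc 0 1 = Ioo 0 c by grind, Real.volume_real_Ioo_of_le hc.1, sub_zero]

theorem lovasz_modularFn (c : ℝ) (g : Fin d → ℝ) {v : Fin d → ℝ} (hv : ∀ j, v j ∈ Icc (0 : ℝ) 1) :
    lovasz (modularFn c g) v = c + ∑ j, g j * v j := by
  have hint : ∀ j, IntegrableOn (fun τ => g j * (Iio (v j)).indicator 1 τ) (Ioc (0 : ℝ) 1) :=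
    fun j => ((integrable_const 1).indicator measurableSet_Iio).const_mul (g j)
  change ∫ τ in Ioc (0 : ℝ) 1, (c + ∑ j, g j * (Iio (v j)).indicator 1 τ) = _
  rw [integral_add (integrable_const c) (integrable_finsetSum _ fun j _ => hint j),
    integral_finsetSum _ fun j _ => hint j]
  simp only [integral_const_mul, setIntegral_Ioc_zero_one_indicator_Iio (hv _)]
  simp

theorem isLowerSet_preimage_setOf_lt {x : Fin d → ℝ} {π : Equiv.Perm (Fin d)}
    (hπ : Antitone fun k => x (π k)) (τ : ℝ) : IsLowerSet (π ⁻¹' {j | τ < x j}) :=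
  fun _ _ hba ha => lt_of_lt_of_le ha (hπ hba)

theorem stmt_11 {d : ℕ} (f : Set (Fin d) → ℝ) (hsub : Submodular f)
    (x : Fin d → ℝ) (hx : ∀ j, x j ∈ Set.Icc (0 : ℝ) 1)
    (π : Equiv.Perm (Fin d)) (hπ : Antitone fun k => x (π k))
    (A : Fin (d + 1) → Set (Fin d))
    (hA : ∀ i, A i = {j | ∃ k : Fin d, (k : ℕ) < (i : ℕ) ∧ π k = j})
    (g : Fin d → ℝ)
    (hg : ∀ k : Fin d, g (π k) = f (A k.succ) - f (A k.castSucc)) :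
    ∀ y : Fin d → ℝ, (∀ j, y j ∈ Set.Icc (0 : ℝ) 1) →
      lovasz f y ≥ lovasz f x + ∑ j, g j * (y j - x j) := by
  intro y hy
  have hg' : ∀ k : Fin d, g (π k) = f (permPrefix π (k + 1)) - f (permPrefix π k) := by
    simpa only [hA, setOf_exists_lt_apply_eq_permPrefix, Fin.val_succ, Fin.val_castSucc] using hg
  have hx_eq : lovasz f x = f ∅ + ∑ j, g j * x j := by
    rw [← lovasz_modularFn (f ∅) g hx]
    exact setIntegral_congr_fun measurableSet_Ioc fun τ _ =>
      (modularFn_eq_of_isLowerSet hg' (isLowerSet_preimage_setOf_lt hπ τ)).symm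
  have hy_le : f ∅ + ∑ j, g j * y j ≤ lovasz f y :=
    (lovasz_modularFn (f ∅) g hy).symm.trans_le (lovasz_mono (hsub.modularFn_le hg') y)
  simp only [mul_sub, Finset.sum_sub_distrib]
  linarith
end

section
/- The Lovász extension f̂ : [0,1]^d → R of a submodular function f : {0,1}^d → R is a convex function. -/
/-!
Sort the coordinates of `v` decreasingly by a permutation `σ`. The level sets `{j | τ < v j}` are
then initial segments of the chain `∅ ⊂ {σ 0} ⊂ {σ 0, σ 1} ⊂ ⋯`, on which `f` agrees with
`f ∅ + x_σ(·)` for the greedy vector `x_σ` of marginal gains along the chain; the layer-cake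
formula gives `f̂ v = f ∅ + ⟪x_σ, v⟫`. Submodularity makes `x_σ(A) ≤ f A - f ∅` for every `A`,
so, integrating over the level sets of any `w` in the cube, `f ∅ + ⟪x_σ, w⟫ ≤ f̂ w`. Hence `f̂` is
a pointwise maximum of affine functions on the cube, so it is convex.
-/

open MeasureTheory

open Set

section Modular

variable {ι : Type*} [Fintype ι]

noncomputable def modular (x : ι → ℝ) (A : Set ι) : ℝ := ∑ j, A.indicator x j

lemma modular_insert (x : ι → ℝ) {A : Set ι} {a : ι} (ha : a ∉ A) :
    modular x (insert a A) = x a + modular x A := by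
  simp only [modular, ← singleton_union,
    indicator_union_of_disjoint (disjoint_singleton_left.2 ha), Finset.sum_add_distrib]
  rw [Fintype.sum_eq_single a fun j hj => indicator_of_notMem (s := {a}) hj x,
    indicator_of_mem (mem_singleton a)]

lemma modular_levelSet_eq_sum_indicator (x v : ι → ℝ) (t : ℝ) :
    modular x {j | t < v j} = ∑ j, (Iio (v j)).indicator (fun _ => x j) t := by
  simp only [modular, Set.indicator, mem_ofPred_eq, mem_Iio]

lemma integrableOn_modular_levelSet (x v : ι → ℝ) :
    IntegrableOn (fun t => modular x {j | t < v j}) (Ioc 0 1) := by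
  simp only [modular_levelSet_eq_sum_indicator]
  exact integrable_finsetSum _ fun j _ =>
    ((integrable_const (x j)).indicator measurableSet_Iio)

lemma integral_modular_levelSet (x v : ι → ℝ) (hv : ∀ j, v j ∈ Icc (0 : ℝ) 1) :
    ∫ t in Ioc 0 1, modular x {j | t < v j} = ∑ j, x j * v j := by
  simp only [modular_levelSet_eq_sum_indicator]
  rw [integral_finsetSum _ fun j _ =>
    ((integrable_const (x j)).indicator measurableSet_Iio)]
  refine Finset.sum_congr rfl fun j _ => ?_
  have hIoo : Ioc 0 1 ∩ Iio (v j) = Ioo 0 (v j) := by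
    ext t
    simp only [mem_inter_iff, mem_Iio, mem_Ioc, mem_Ioo]
    exact ⟨fun h => ⟨h.1.1, h.2⟩, fun h => ⟨⟨h.1, h.2.le.trans (hv j).2⟩, h.2⟩⟩
  rw [setIntegral_indicator measurableSet_Iio, hIoo, setIntegral_const,
    Real.volume_real_Ioo_of_le (hv j).1, smul_eq_mul, sub_zero, mul_comm]

end Modular

section Chain

variable {d : ℕ}

-- `{σ 0, …, σ (k - 1)}`; the index is a natural number so that `k = d` is allowed.
def prefixSet (σ : Equiv.Perm (Fin d)) (k : ℕ) : Set (Fin d) := {j | (σ.symm j : ℕ) < k}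

lemma prefixSet_zero (σ : Equiv.Perm (Fin d)) : prefixSet σ 0 = ∅ := by
  simp [prefixSet]

lemma prefixSet_of_le (σ : Equiv.Perm (Fin d)) {k : ℕ} (hk : d ≤ k) : prefixSet σ k = univ :=
  eq_univ_of_forall fun j => (σ.symm j).isLt.trans_le hk

lemma prefixSet_succ (σ : Equiv.Perm (Fin d)) {k : ℕ} (hk : k < d) :
    prefixSet σ (k + 1) = insert (σ ⟨k, hk⟩) (prefixSet σ k) := by
  ext j
  simp only [prefixSet, mem_insert_iff, mem_ofPred_eq, ← Equiv.symm_apply_eq, Fin.ext_iff]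
  omega

lemma perm_notMem_prefixSet (σ : Equiv.Perm (Fin d)) {k : ℕ} (hk : k < d) :
    σ ⟨k, hk⟩ ∉ prefixSet σ k := by
  simp [prefixSet]

noncomputable def greedy (f : Set (Fin d) → ℝ) (σ : Equiv.Perm (Fin d)) (j : Fin d) : ℝ :=
  f (prefixSet σ (σ.symm j + 1)) - f (prefixSet σ (σ.symm j))

lemma greedy_perm_apply (f : Set (Fin d) → ℝ) (σ : Equiv.Perm (Fin d)) {k : ℕ} (hk : k < d) :
    greedy f σ (σ ⟨k, hk⟩) = f (prefixSet σ (k + 1)) - f (prefixSet σ k) := by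
  simp [greedy]

lemma modular_greedy_prefixSet (f : Set (Fin d) → ℝ) (σ : Equiv.Perm (Fin d)) {k : ℕ}
    (hk : k ≤ d) : modular (greedy f σ) (prefixSet σ k) = f (prefixSet σ k) - f ∅ := by
  induction k with
  | zero => simp [prefixSet_zero, modular]
  | succ k ih =>
    rw [prefixSet_succ σ hk, modular_insert _ (perm_notMem_prefixSet σ hk), ih (by omega),
      greedy_perm_apply, ← prefixSet_succ σ hk]
    ring

lemma Submodular.modular_greedy_inter_prefixSet_le {f : Set (Fin d) → ℝ} (hf : Submodular f)
    (σ : Equiv.Perm (Fin d)) (A : Set (Fin d)) (k : ℕ) :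
    modular (greedy f σ) (A ∩ prefixSet σ k) ≤ f (A ∩ prefixSet σ k) - f ∅ := by
  induction k with
  | zero => simp [prefixSet_zero, modular]
  | succ k ih =>
    rcases lt_or_ge k d with hk | hk
    swap
    · rwa [prefixSet_of_le σ (by omega : d ≤ k + 1), ← prefixSet_of_le σ hk]
    set p := σ ⟨k, hk⟩
    by_cases hpA : p ∈ A
    swap
    · rwa [prefixSet_succ σ hk, inter_insert_of_notMem hpA]
    have hp : p ∉ A ∩ prefixSet σ k := fun h => perm_notMem_prefixSet σ hk h.2
    have hunion : prefixSet σ k ∪ insert p (A ∩ prefixSet σ k) = prefixSet σ (k + 1) := by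
      rw [prefixSet_succ σ hk]; grind
    have hinter : prefixSet σ k ∩ insert p (A ∩ prefixSet σ k) = A ∩ prefixSet σ k := by
      rw [inter_insert_of_notMem (perm_notMem_prefixSet σ hk)]; grind
    have hmarginal := hf (prefixSet σ k) (insert p (A ∩ prefixSet σ k))
    rw [hunion, hinter] at hmarginal
    rw [prefixSet_succ σ hk, inter_insert_of_mem hpA, modular_insert _ hp, greedy_perm_apply]
    linarith

lemma Submodular.modular_greedy_le {f : Set (Fin d) → ℝ} (hf : Submodular f)
    (σ : Equiv.Perm (Fin d)) (A : Set (Fin d)) : modular (greedy f σ) A ≤ f A - f ∅ := by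
  simpa [prefixSet_of_le σ le_rfl] using hf.modular_greedy_inter_prefixSet_le σ A d

lemma exists_perm_antitone_comp (v : Fin d → ℝ) : ∃ σ : Equiv.Perm (Fin d), Antitone (v ∘ σ) :=
  ⟨Tuple.sort (-v), fun _ _ hab => neg_le_neg_iff.1 (Tuple.monotone_sort (-v) hab)⟩

lemma exists_levelSet_eq_prefixSet {v : Fin d → ℝ} {σ : Equiv.Perm (Fin d)}
    (hσ : Antitone (v ∘ σ)) (t : ℝ) : ∃ k ≤ d, {j | t < v j} = prefixSet σ k := by
  have hlower : IsLowerSet {i | t < v (σ i)} := fun _ _ hba ha => ha.trans_le (hσ hba)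
  rcases hlower.eq_univ_or_Iio with h | ⟨a, h⟩
  · refine ⟨d, le_rfl, ?_⟩
    rw [prefixSet_of_le σ le_rfl]
    ext j
    have hj := Set.ext_iff.1 h (σ.symm j)
    simp only [mem_ofPred_eq, mem_univ, Equiv.apply_symm_apply, iff_true] at hj ⊢
    exact hj
  · refine ⟨a, a.isLt.le, ?_⟩
    ext j
    have hj := Set.ext_iff.1 h (σ.symm j)
    simp only [prefixSet, mem_ofPred_eq, mem_Iio, Equiv.apply_symm_apply, Fin.lt_def] at hj ⊢
    exact hj

lemma apply_levelSet_eq (f : Set (Fin d) → ℝ) {v : Fin d → ℝ} {σ : Equiv.Perm (Fin d)}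
    (hσ : Antitone (v ∘ σ)) (t : ℝ) :
    f {j | t < v j} = f ∅ + modular (greedy f σ) {j | t < v j} := by
  obtain ⟨k, hk, h⟩ := exists_levelSet_eq_prefixSet hσ t
  rw [h, modular_greedy_prefixSet f σ hk]
  ring

lemma integrableOn_apply_levelSet (f : Set (Fin d) → ℝ) (v : Fin d → ℝ) :
    IntegrableOn (fun t => f {j | t < v j}) (Ioc 0 1) := by
  -- along a sorting permutation the integrand is `f ∅` plus a finite sum of indicators
  obtain ⟨σ, hσ⟩ := exists_perm_antitone_comp v
  simp_rw [apply_levelSet_eq f hσ]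
  exact (integrable_const _).add (integrableOn_modular_levelSet _ v)

lemma lovasz_eq_greedy (f : Set (Fin d) → ℝ) {v : Fin d → ℝ} {σ : Equiv.Perm (Fin d)}
    (hσ : Antitone (v ∘ σ)) (hv : ∀ j, v j ∈ Icc (0 : ℝ) 1) :
    lovasz f v = f ∅ + ∑ j, greedy f σ j * v j := by
  simp_rw [lovasz, apply_levelSet_eq f hσ]
  rw [integral_add (integrable_const _) (integrableOn_modular_levelSet _ v), setIntegral_const,
    integral_modular_levelSet _ v hv]
  simp

lemma add_sum_mul_le_lovasz (f : Set (Fin d) → ℝ) {x : Fin d → ℝ}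
    (hx : ∀ A, modular x A ≤ f A - f ∅) {v : Fin d → ℝ} (hv : ∀ j, v j ∈ Icc (0 : ℝ) 1) :
    f ∅ + ∑ j, x j * v j ≤ lovasz f v := by
  rw [← integral_modular_levelSet x v hv]
  calc f ∅ + ∫ t in Ioc 0 1, modular x {j | t < v j}
      = ∫ t in Ioc 0 1, (f ∅ + modular x {j | t < v j}) := by
        rw [integral_add (integrable_const _) (integrableOn_modular_levelSet _ v),
          setIntegral_const]
        simp
    _ ≤ lovasz f v :=
        setIntegral_mono ((integrable_const _).add (integrableOn_modular_levelSet _ v))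
          (integrableOn_apply_levelSet f v) fun t => by linarith [hx {j | t < v j}]

end Chain

theorem stmt_12 {d : ℕ} (f : Set (Fin d) → ℝ) (hsub : Submodular f) :
    ConvexOn ℝ {v : Fin d → ℝ | ∀ j, v j ∈ Set.Icc (0 : ℝ) 1} (lovasz f) := by
  have hcube : Convex ℝ {v : Fin d → ℝ | ∀ j, v j ∈ Set.Icc (0 : ℝ) 1} :=
    fun v hv w hw a b ha hb hab j => convex_Icc 0 1 (hv j) (hw j) ha hb hab
  refine ⟨hcube, fun v hv w hw a b ha hb hab => ?_⟩
  obtain ⟨σ, hσ⟩ := exists_perm_antitone_comp (a • v + b • w)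
  calc lovasz f (a • v + b • w)
      = f ∅ + ∑ j, greedy f σ j * (a • v + b • w) j :=
        lovasz_eq_greedy f hσ (hcube hv hw ha hb hab)
    _ = a * (f ∅ + ∑ j, greedy f σ j * v j) + b * (f ∅ + ∑ j, greedy f σ j * w j) := by
        simp only [Pi.add_apply, Pi.smul_apply, smul_eq_mul, mul_add, Finset.sum_add_distrib,
          Finset.mul_sum, mul_left_comm (greedy f σ _)]
        linear_combination -(f ∅) * hab
    _ ≤ a • lovasz f v + b • lovasz f w := by
        rw [smul_eq_mul, smul_eq_mul]
        gcongr
        exacts [add_sum_mul_le_lovasz f (hsub.modular_greedy_le σ) hv,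
          add_sum_mul_le_lovasz f (hsub.modular_greedy_le σ) hw]
end
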